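/- arXiv:1601.02882 — 5 statements merged into one kernel-verified Lean document; each statement's English description precedes it below -/
import Mathlib

section
/- Let X, Y, Z : Ω → {-1,+1} be functions on a finite set Ω and let p : Ω → ℝ be a probability distribution (p(ω) ≥ 0, ∑ p(ω) = 1). Then |E[XY] − E[YZ]| ≤ 1 − E[XZ], where E[f] = ∑_ω f(ω)·p(ω). -/
/-- Bell's inequality in the hidden-state formulation. -/
theorem bell_inequality {Ω : Type*} [Fintype Ω]
    (X Y Z : Ω → ℝ) (hX : ∀ ω, X ω = -1 ∨ X ω = 1)
    (hY : ∀ ω, Y ω = -1 ∨ Y ω = 1) (hZ : ∀ ω, Z ω = -1 ∨ Z ω = 1)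
    (p : Ω → ℝ) (hp : ∀ ω, 0 ≤ p ω) (hp1 : ∑ ω, p ω = 1) :
    |(∑ ω, X ω * Y ω * p ω) - (∑ ω, Y ω * Z ω * p ω)| ≤
      1 - ∑ ω, X ω * Z ω * p ω := by
  have key : ∀ ω, |X ω * Y ω * p ω - Y ω * Z ω * p ω| ≤ (1 - X ω * Z ω) * p ω := by
    intro ω
    rcases hX ω with h1 | h1 <;> rcases hY ω with h2 | h2 <;> rcases hZ ω with h3 | h3 <;>
      simp [h1, h2, h3, abs_of_nonneg (hp ω), hp ω] <;>
        (rw [abs_le]; constructor <;> linarith [hp ω])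
  calc |(∑ ω, X ω * Y ω * p ω) - (∑ ω, Y ω * Z ω * p ω)|
      = |∑ ω, (X ω * Y ω * p ω - Y ω * Z ω * p ω)| := by rw [Finset.sum_sub_distrib]
    _ ≤ ∑ ω, |X ω * Y ω * p ω - Y ω * Z ω * p ω| := Finset.abs_sum_le_sum_abs _ _
    _ ≤ ∑ ω, (1 - X ω * Z ω) * p ω := Finset.sum_le_sum fun ω _ => key ω
    _ = 1 - ∑ ω, X ω * Z ω * p ω := by
        simp [sub_mul, Finset.sum_sub_distrib, hp1]
end

section
/- Let V be a finite-dimensional normed complex vector space and F : V → V a linear operator. If for some v ∈ V there is a bound c with ‖F^t(v)‖ ≤ c for all t ≥ 0, then the Cesàro averages (1/t)·∑_{k=0}^{t-1} F^k(v) converge as t → ∞. -/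
open Filter

/-- Bounded orbit implies convergence of Cesàro averages for a linear operator
on a finite-dimensional complex normed vector space. -/
theorem cesaro_limit_of_bounded_orbit {V : Type*} [NormedAddCommGroup V]
    [NormedSpace ℂ V] [FiniteDimensional ℂ V] (F : V →ₗ[ℂ] V) (v : V)
    (hbdd : ∃ c : ℝ, ∀ t : ℕ, ‖(F ^ t) v‖ ≤ c) :
    ∃ L : V, Tendsto (fun t : ℕ => (t : ℂ)⁻¹ • ∑ k ∈ Finset.range t, (F ^ k) v)
      atTop (nhds L) := by
  obtain ⟨c, hc⟩ := hbdd
  set W : Submodule ℂ V := Submodule.span ℂ (Set.range fun k : ℕ => (F ^ k) v) with hWdef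
  have hFW : ∀ x ∈ W, F x ∈ W := by
    intro x hx
    have hmap : W.map F ≤ W := by
      rw [hWdef, Submodule.map_span, Submodule.span_le]
      rintro _ ⟨_, ⟨k, rfl⟩, rfl⟩
      refine Submodule.subset_span ⟨k + 1, ?_⟩
      simp [pow_succ']
    exact hmap ⟨x, hx, rfl⟩
  -- power-boundedness on W
  have hbW : ∀ x ∈ W, ∃ C : ℝ, ∀ t : ℕ, ‖(F ^ t) x‖ ≤ C := by
    intro x hx
    induction hx using Submodule.span_induction with
    | mem x hxm =>
      obtain ⟨k, rfl⟩ := hxm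
      exact ⟨c, fun t => by
        have : (F ^ t) ((F ^ k) v) = (F ^ (t + k)) v := by
          rw [pow_add]; rfl
        rw [this]; exact hc _⟩
    | zero => exact ⟨0, fun t => by simp⟩
    | add x y _ _ hx hy =>
      obtain ⟨C₁, h₁⟩ := hx; obtain ⟨C₂, h₂⟩ := hy
      exact ⟨C₁ + C₂, fun t => by
        rw [map_add]
        exact (norm_add_le _ _).trans (add_le_add (h₁ t) (h₂ t))⟩
    | smul a x _ hx =>
      obtain ⟨C, h⟩ := hx
      exact ⟨‖a‖ * C, fun t => by
        rw [map_smul, norm_smul]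
        exact mul_le_mul_of_nonneg_left (h t) (norm_nonneg a)⟩
  -- the restriction of F to W
  set G : W →ₗ[ℂ] W := F.restrict hFW with hGdef
  have hGcoe : ∀ x : W, ((G x : V)) = F (x : V) := fun x => rfl
  have hpow : ∀ (n : ℕ) (x : W), (((G ^ n) x : V)) = (F ^ n) (x : V) := by
    intro n
    induction n with
    | zero => intro x; rfl
    | succ n ih =>
      intro x
      have h1 : (G ^ (n + 1)) x = (G ^ n) (G x) := by
        rw [pow_succ]; rfl
      have h2 : (F ^ (n + 1)) (x : V) = (F ^ n) (F (x : V)) := by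
        rw [pow_succ]; rfl
      rw [h1, h2, ih, hGcoe]
  -- disjointness of ker(G-1) and range(G-1)
  set K := LinearMap.ker (G - 1) with hKdef
  set R := LinearMap.range (G - 1) with hRdef
  have hdisj : Disjoint K R := by
    rw [Submodule.disjoint_def]
    intro y hyK hyR
    obtain ⟨x, hx⟩ := hyR
    have hGy : G y = y := by
      have := hyK
      rw [hKdef, LinearMap.mem_ker, LinearMap.sub_apply, Module.End.one_apply,
        sub_eq_zero] at this
      exact this
    have hGx : G x = x + y := by
      have : G x - x = y := by
        rw [← hx]; simp [LinearMap.sub_apply]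
      rw [← this]; abel
    have hiter : ∀ n : ℕ, (G ^ n) x = x + n • y := by
      intro n
      induction n with
      | zero => simp
      | succ n ih =>
        have : (G ^ (n + 1)) x = G ((G ^ n) x) := by
          rw [pow_succ']; rfl
        rw [this, ih, map_add, map_nsmul, hGx, hGy, succ_nsmul]
        abel
    obtain ⟨C, hC⟩ := hbW (x : V) x.2
    have hbound : ∀ n : ℕ, (n : ℝ) * ‖(y : V)‖ ≤ C + ‖(x : V)‖ := by
      intro n
      have h1 : ‖(F ^ n) (x : V)‖ ≤ C := hC n
      have h2 : (F ^ n) (x : V) = (x : V) + n • (y : V) := by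
        rw [← hpow, hiter]
        push_cast
        rfl
      have h4 : ‖(x : V) + n • (y : V) - (x : V)‖ ≤ ‖(x : V) + n • (y : V)‖ + ‖(x : V)‖ :=
        norm_sub_le _ _
      have h5 : (x : V) + n • (y : V) - (x : V) = (n : ℝ) • (y : V) := by
        rw [← Nat.cast_smul_eq_nsmul ℝ]; abel
      rw [h5, norm_smul, Real.norm_natCast] at h4
      rw [← h2] at h4
      linarith
    by_contra hy0
    have hy0' : (0 : ℝ) < ‖(y : V)‖ := by
      rcases (norm_nonneg (y : V)).lt_or_eq with h | h
      · exact h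
      · exact absurd (Subtype.ext (norm_eq_zero.mp h.symm)) hy0
    obtain ⟨n, hn⟩ := exists_nat_gt ((C + ‖(x : V)‖) / ‖(y : V)‖)
    have := hbound n
    rw [← le_div_iff₀ hy0'] at this
    exact absurd hn (not_lt.mpr this)
  -- rank-nullity: K ⊔ R = ⊤
  have hrank : K ⊔ R = ⊤ := by
    apply Submodule.eq_top_of_finrank_eq
    have h1 := Submodule.finrank_sup_add_finrank_inf_eq K R
    have h2 : K ⊓ R = ⊥ := disjoint_iff.mp hdisj
    rw [h2] at h1
    simp only [finrank_bot, add_zero] at h1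
    rw [h1, add_comm]
    exact LinearMap.finrank_range_add_finrank_ker (G - 1)
  -- decompose v
  have hvW : v ∈ W := Submodule.subset_span ⟨0, by simp⟩
  have hvmem : (⟨v, hvW⟩ : W) ∈ K ⊔ R := hrank ▸ Submodule.mem_top
  obtain ⟨p, hpK, r, hrR, hpr⟩ := Submodule.mem_sup.mp hvmem
  obtain ⟨u, hu⟩ := hrR
  have hGp : G p = p := by
    rw [hKdef, LinearMap.mem_ker, LinearMap.sub_apply, Module.End.one_apply,
      sub_eq_zero] at hpK
    exact hpK
  set p₀ : V := (p : V) with hp0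
  set u₀ : V := (u : V) with hu0
  have hFp : F p₀ = p₀ := by rw [hp0, ← hGcoe, hGp]
  have hFkp : ∀ k : ℕ, (F ^ k) p₀ = p₀ := by
    intro k
    induction k with
    | zero => rfl
    | succ k ih =>
      have : (F ^ (k + 1)) p₀ = F ((F ^ k) p₀) := by rw [pow_succ']; rfl
      rw [this, ih, hFp]
  have hv_eq : v = p₀ + (F u₀ - u₀) := by
    have hcoe : v = (p : V) + (r : V) := by
      rw [← Submodule.coe_add, hpr]
    have hr : (r : V) = F u₀ - u₀ := by
      rw [← hu]
      show (((G - 1) u : W) : V) = F u₀ - u₀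
      rw [LinearMap.sub_apply, Module.End.one_apply, Submodule.coe_sub, hGcoe]
    rw [hcoe, hr]
  -- sum formula
  have hsum : ∀ t : ℕ, ∑ k ∈ Finset.range t, (F ^ k) v
      = t • p₀ + ((F ^ t) u₀ - u₀) := by
    intro t
    have : ∀ k : ℕ, (F ^ k) v = p₀ + ((F ^ (k + 1)) u₀ - (F ^ k) u₀) := by
      intro k
      rw [hv_eq, map_add, hFkp, map_sub, ← Module.End.mul_apply, ← pow_succ]
    calc ∑ k ∈ Finset.range t, (F ^ k) v
        = ∑ k ∈ Finset.range t, (p₀ + ((F ^ (k + 1)) u₀ - (F ^ k) u₀)) := by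
          exact Finset.sum_congr rfl fun k _ => this k
      _ = t • p₀ + ((F ^ t) u₀ - u₀) := by
          rw [Finset.sum_add_distrib, Finset.sum_const, Finset.sum_range_sub
            (fun k => (F ^ k) u₀)]
          simp
  refine ⟨p₀, ?_⟩
  have hfun : ∀ t : ℕ, (t : ℂ)⁻¹ • ∑ k ∈ Finset.range t, (F ^ k) v
      = (t : ℂ)⁻¹ • (t • p₀) + (t : ℂ)⁻¹ • ((F ^ t) u₀ - u₀) := by
    intro t
    rw [hsum, smul_add]
  obtain ⟨Cu, hCu⟩ := hbW u₀ u.2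
  have h1 : Tendsto (fun t : ℕ => (t : ℂ)⁻¹ • (t • p₀)) atTop (nhds p₀) := by
    refine Tendsto.congr' ?_ (tendsto_const_nhds (x := p₀))
    filter_upwards [eventually_ge_atTop 1] with t ht
    have ht' : (t : ℂ) ≠ 0 := Nat.cast_ne_zero.mpr (by omega)
    rw [← Nat.cast_smul_eq_nsmul ℂ, smul_smul, inv_mul_cancel₀ ht', one_smul]
  have h2 : Tendsto (fun t : ℕ => (t : ℂ)⁻¹ • ((F ^ t) u₀ - u₀)) atTop (nhds 0) := by
    apply squeeze_zero_norm (a := fun t : ℕ => (t : ℝ)⁻¹ * (Cu + ‖u₀‖)) ?_ ?_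
    · intro t
      rw [norm_smul, norm_inv, Complex.norm_natCast]
      exact mul_le_mul_of_nonneg_left ((norm_sub_le _ _).trans
        (add_le_add (hCu t) le_rfl)) (by positivity)
    · have := tendsto_inv_atTop_nhds_zero_nat.mul_const (Cu + ‖u₀‖)
      simpa using this
  have := h1.add h2
  rw [add_zero] at this
  exact this.congr fun t => (hfun t).symm
end

section
/- Let V be a finite-dimensional normed complex vector space and F : V → V linear. Then the Cesàro averages (1/t)∑_{k=0}^{t-1}F^k(v) converge for all v ∈ V if and only if for every v ∈ V the orbit (F^t(v))_{t≥0} is bounded, i.e. there exists c ∈ ℝ with ‖F^t(v)‖ ≤ c for all t ≥ 0. -/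
open Filter

section CesaroAux

variable {V : Type*} [NormedAddCommGroup V] [NormedSpace ℂ V]

/-- From Cesàro convergence at `v`, we get `F^t v / t → 0`. -/
private lemma cesaro_key (F : V →ₗ[ℂ] V) (v : V)
    (h : ∃ L : V, Tendsto (fun t : ℕ => (t : ℂ)⁻¹ • ∑ k ∈ Finset.range t, (F ^ k) v)
      atTop (nhds L)) :
    Tendsto (fun t : ℕ => (t : ℂ)⁻¹ • (F ^ t) v) atTop (nhds 0) := by
  obtain ⟨L, hL⟩ := h
  set A : ℕ → V := fun t => (t : ℂ)⁻¹ • ∑ k ∈ Finset.range t, (F ^ k) v with hA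
  have hinv : Tendsto (fun t : ℕ => ((t : ℂ))⁻¹) atTop (nhds 0) := by
    rw [tendsto_zero_iff_norm_tendsto_zero]
    simpa using tendsto_inv_atTop_nhds_zero_nat (𝕜 := ℝ)
  have hscal : Tendsto (fun t : ℕ => ((t : ℂ) + 1) * (t : ℂ)⁻¹) atTop (nhds 1) := by
    have h1 : Tendsto (fun t : ℕ => (1 : ℂ) + (t : ℂ)⁻¹) atTop (nhds 1) := by
      simpa using tendsto_const_nhds.add hinv
    refine h1.congr' ?_
    filter_upwards [eventually_ge_atTop 1] with t ht
    have ht0 : (t : ℂ) ≠ 0 := Nat.cast_ne_zero.2 (by omega)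
    field_simp
  have hmain : Tendsto (fun t : ℕ => (((t : ℂ) + 1) * (t : ℂ)⁻¹) • A (t + 1) - A t)
      atTop (nhds 0) := by
    have := (hscal.smul (hL.comp (tendsto_add_atTop_nat 1))).sub hL
    simpa using this
  refine hmain.congr' ?_
  filter_upwards [eventually_ge_atTop 1] with t ht
  have ht0 : (t : ℂ) ≠ 0 := Nat.cast_ne_zero.2 (by omega)
  have ht1 : ((t : ℂ) + 1) ≠ 0 := by
    intro hc
    have : ((t + 1 : ℕ) : ℂ) = 0 := by push_cast; linear_combination hc
    exact (Nat.cast_ne_zero.2 (Nat.succ_ne_zero t)) this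
  have hA1 : A (t + 1) = ((t : ℂ) + 1)⁻¹ • ∑ k ∈ Finset.range (t + 1), (F ^ k) v := by
    simp [hA]
  rw [hA1, smul_smul]
  have hco : ((t : ℂ) + 1) * (t : ℂ)⁻¹ * ((t : ℂ) + 1)⁻¹ = (t : ℂ)⁻¹ := by
    field_simp
  rw [hco, hA, Finset.sum_range_succ, smul_add, add_sub_cancel_left]

private lemma eig_pow (F : V →ₗ[ℂ] V) (μ : ℂ) (v : V) (hv : F v = μ • v) (t : ℕ) :
    (F ^ t) v = μ ^ t • v := by
  induction t with
  | zero => simp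
  | succ n ih =>
    rw [pow_succ', Module.End.mul_apply, ih, map_smul, hv, smul_smul, ← pow_succ]

private lemma chain_pow (F : V →ₗ[ℂ] V) (μ : ℂ) (u v : V) (hu : F u = μ • u)
    (hv : F v = μ • v + u) (k : ℕ) :
    (F ^ (k + 1)) v = μ ^ (k + 1) • v + (((k : ℂ) + 1) * μ ^ k) • u := by
  induction k with
  | zero => simpa using hv
  | succ n ih =>
    rw [pow_succ', Module.End.mul_apply, ih, map_add, map_smul, map_smul, hv, hu]
    push_cast
    module

private lemma pow_apply_expand (F : V →ₗ[ℂ] V) (μ : ℂ) (v : V) (k : ℕ)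
    (hk : ((F - μ • 1) ^ k) v = 0) (t : ℕ) (ht : k ≤ t) :
    (F ^ t) v
      = ∑ j ∈ Finset.range k, ((t.choose j : ℂ) * μ ^ (t - j)) • ((F - μ • 1) ^ j) v := by
  have hcomm : Commute (F - μ • (1 : Module.End ℂ V)) (μ • (1 : Module.End ℂ V)) :=
    (Commute.one_right _).smul_right μ
  have hFeq : F = (F - μ • 1) + μ • (1 : Module.End ℂ V) := by abel
  have hzero : ∀ j, k ≤ j → ((F - μ • 1) ^ j) v = 0 := by
    intro j hj
    rw [← Nat.sub_add_cancel hj, pow_add, Module.End.mul_apply, hk, map_zero]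
  calc (F ^ t) v = (((F - μ • 1) + μ • 1) ^ t) v := by rw [← hFeq]
    _ = (∑ j ∈ Finset.range (t + 1),
          (F - μ • 1) ^ j * (μ • 1) ^ (t - j) * (t.choose j : Module.End ℂ V)) v := by
        rw [hcomm.add_pow]
    _ = ∑ j ∈ Finset.range (t + 1),
          ((t.choose j : ℂ) * μ ^ (t - j)) • ((F - μ • 1) ^ j) v := by
        rw [LinearMap.sum_apply]
        refine Finset.sum_congr rfl fun j _ => ?_
        rw [Module.End.mul_apply, Module.End.mul_apply, Module.End.natCast_apply,
          smul_pow, one_pow]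
        rw [LinearMap.smul_apply, Module.End.one_apply, map_smul, map_nsmul]
        rw [← Nat.cast_smul_eq_nsmul ℂ (t.choose j), smul_smul, mul_comm]
    _ = ∑ j ∈ Finset.range k, ((t.choose j : ℂ) * μ ^ (t - j)) • ((F - μ • 1) ^ j) v := by
        refine (Finset.sum_subset ?_ ?_).symm
        · exact Finset.range_subset_range.2 (by omega)
        · intro j _ hj
          rw [hzero j (by simpa using hj), smul_zero]

private lemma small_orbit_tendsto (F : V →ₗ[ℂ] V) (μ : ℂ) (hμ : ‖μ‖ < 1) (v : V) (k : ℕ)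
    (hk : ((F - μ • 1) ^ k) v = 0) :
    Tendsto (fun t : ℕ => (F ^ t) v) atTop (nhds 0) := by
  rcases eq_or_ne μ 0 with rfl | hμ0
  · have hFk : (F ^ k) v = 0 := by simpa using hk
    have : ∀ᶠ t in atTop, (0 : V) = (F ^ t) v := by
      filter_upwards [eventually_ge_atTop k] with t ht
      rw [← Nat.sub_add_cancel ht, pow_add, Module.End.mul_apply, hFk, map_zero]
    exact tendsto_const_nhds.congr' this
  · have hterm : ∀ j : ℕ, Tendsto
        (fun t : ℕ => ((t.choose j : ℂ) * μ ^ (t - j)) • ((F - μ • 1) ^ j) v)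
        atTop (nhds 0) := by
      intro j
      have hsc : Tendsto (fun t : ℕ => (t.choose j : ℂ) * μ ^ (t - j)) atTop (nhds 0) := by
        apply squeeze_zero_norm' (a := fun t : ℕ => ((t : ℝ) ^ j * ‖μ‖ ^ t) / ‖μ‖ ^ j)
        · filter_upwards [eventually_ge_atTop j] with t ht
          rw [norm_mul, norm_pow, Complex.norm_natCast,
            pow_sub₀ ‖μ‖ (norm_ne_zero_iff.2 hμ0) ht, div_eq_mul_inv, mul_assoc]
          refine mul_le_mul_of_nonneg_right ?_ (by positivity)
          exact_mod_cast Nat.choose_le_pow t j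
        · have := (tendsto_pow_const_mul_const_pow_of_lt_one j (norm_nonneg μ) hμ).div_const
            (‖μ‖ ^ j)
          simpa using this
      have := hsc.smul_const (((F - μ • 1) ^ j) v)
      simpa using this
    have hsum : Tendsto
        (fun t : ℕ => ∑ j ∈ Finset.range k,
          ((t.choose j : ℂ) * μ ^ (t - j)) • ((F - μ • 1) ^ j) v) atTop (nhds 0) := by
      have := tendsto_finset_sum (Finset.range k) (fun j _ => hterm j)
      simpa using this
    refine hsum.congr' ?_
    filter_upwards [eventually_ge_atTop k] with t ht
    exact (pow_apply_expand F μ v k hk t ht).symm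

end CesaroAux

/-- The Cesàro averages of a linear operator on a finite-dimensional complex
normed vector space converge for every vector iff every orbit is bounded. -/
theorem cesaro_limit_iff_bounded_orbits {V : Type*} [NormedAddCommGroup V]
    [NormedSpace ℂ V] [FiniteDimensional ℂ V] (F : V →ₗ[ℂ] V) :
    (∀ v : V, ∃ L : V,
        Tendsto (fun t : ℕ => (t : ℂ)⁻¹ • ∑ k ∈ Finset.range t, (F ^ k) v)
          atTop (nhds L)) ↔
    (∀ v : V, ∃ c : ℝ, ∀ t : ℕ, ‖(F ^ t) v‖ ≤ c) := by
  constructor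
  · -- Cesàro convergence implies bounded orbits
    intro h
    have key : ∀ v : V, Tendsto (fun t : ℕ => (t : ℂ)⁻¹ • (F ^ t) v) atTop (nhds 0) :=
      fun v => cesaro_key F v (h v)
    -- no eigenvalues of modulus > 1
    have h1 : ∀ μ : ℂ, 1 < ‖μ‖ → ∀ v : V, F v = μ • v → v = 0 := by
      intro μ hμ v hv
      by_contra hv0
      have hnorm : Tendsto (fun t : ℕ => ‖(t : ℂ)⁻¹ • (F ^ t) v‖) atTop (nhds 0) := by
        simpa using (key v).norm
      have hev : ∀ᶠ t : ℕ in atTop, (‖μ‖ - 1) * ‖v‖ ≤ ‖(t : ℂ)⁻¹ • (F ^ t) v‖ := by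
        filter_upwards [eventually_ge_atTop 1] with t ht
        rw [eig_pow F μ v hv, norm_smul, norm_smul, norm_inv, norm_pow, Complex.norm_natCast]
        have ht' : (1 : ℝ) ≤ (t : ℝ) := by exact_mod_cast ht
        have hb : 1 + (t : ℝ) * (‖μ‖ - 1) ≤ ‖μ‖ ^ t := by
          have := one_add_mul_le_pow (a := ‖μ‖ - 1) (by linarith) t
          simpa using this
        rw [inv_mul_eq_div, le_div_iff₀ (by linarith)]
        have hvn : (0 : ℝ) ≤ ‖v‖ := norm_nonneg v
        nlinarith [mul_le_mul_of_nonneg_right hb hvn]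
      have hle : (‖μ‖ - 1) * ‖v‖ ≤ 0 := ge_of_tendsto hnorm hev
      have hpos : 0 < (‖μ‖ - 1) * ‖v‖ :=
        mul_pos (by linarith) (norm_pos_iff.2 hv0)
      linarith
    -- modulus-one eigenvalues have no Jordan chains
    have h2 : ∀ μ : ℂ, ‖μ‖ = 1 → ∀ u v : V, F u = μ • u → F v = μ • v + u → u = 0 := by
      intro μ hμ u v hu hv
      by_contra hu0
      have hk : Tendsto (fun k : ℕ => (((k + 1 : ℕ) : ℂ))⁻¹ • (F ^ (k + 1)) v)
          atTop (nhds 0) := (key v).comp (tendsto_add_atTop_nat 1)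
      have hrw : ∀ k : ℕ, (((k + 1 : ℕ) : ℂ))⁻¹ • (F ^ (k + 1)) v
          = ((((k : ℂ) + 1))⁻¹ * μ ^ (k + 1)) • v + μ ^ k • u := by
        intro k
        have hk1 : ((k : ℂ) + 1) ≠ 0 := by
          intro hc
          have : ((k + 1 : ℕ) : ℂ) = 0 := by push_cast; linear_combination hc
          exact (Nat.cast_ne_zero.2 (Nat.succ_ne_zero k)) this
        rw [chain_pow F μ u v hu hv k, smul_add]
        push_cast
        rw [smul_smul, smul_smul]
        congr 1
        rw [show ((k : ℂ) + 1)⁻¹ * (((k : ℂ) + 1) * μ ^ k) = (((k : ℂ) + 1)⁻¹ * ((k : ℂ) + 1)) * μ ^ k by ring,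
          inv_mul_cancel₀ hk1, one_mul]
      have hk' : Tendsto (fun k : ℕ => ((((k : ℂ) + 1))⁻¹ * μ ^ (k + 1)) • v + μ ^ k • u)
          atTop (nhds 0) := by
        refine hk.congr (fun k => ?_)
        rw [hrw k]
      have hfirst : Tendsto (fun k : ℕ => ((((k : ℂ) + 1))⁻¹ * μ ^ (k + 1)) • v)
          atTop (nhds 0) := by
        apply squeeze_zero_norm (a := fun k : ℕ => ((k : ℝ) + 1)⁻¹ * ‖v‖)
        · intro k
          rw [norm_smul, norm_mul, norm_inv, norm_pow, hμ, one_pow, mul_one]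
          have : ‖(k : ℂ) + 1‖ = (k : ℝ) + 1 := by
            rw [show ((k : ℂ) + 1) = ((k + 1 : ℕ) : ℂ) by push_cast; ring, Complex.norm_natCast]
            push_cast; ring
          rw [this]
        · have : Tendsto (fun k : ℕ => ((k : ℝ) + 1)⁻¹) atTop (nhds 0) := by
            have := (tendsto_inv_atTop_nhds_zero_nat (𝕜 := ℝ)).comp (tendsto_add_atTop_nat 1)
            refine this.congr (fun k => ?_)
            simp
          simpa using this.mul_const ‖v‖
      have hsecond : Tendsto (fun k : ℕ => μ ^ k • u) atTop (nhds 0) := by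
        have h0 := hk'.sub hfirst
        rw [sub_zero] at h0
        exact h0.congr fun k => add_sub_cancel_left _ _
      have : Tendsto (fun _ : ℕ => ‖u‖) atTop (nhds 0) := by
        have : Tendsto (fun k : ℕ => ‖μ ^ k • u‖) atTop (nhds 0) := by
          simpa using hsecond.norm
        refine this.congr (fun k => ?_)
        rw [norm_smul, norm_pow, hμ, one_pow, one_mul]
      have := tendsto_nhds_unique this tendsto_const_nhds
      exact hu0 (norm_eq_zero.1 this.symm)
    -- kernels stabilize for |μ| ≥ 1
    have hker : ∀ μ : ℂ, 1 ≤ ‖μ‖ → ∀ (k : ℕ) (v : V),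
        ((F - μ • 1) ^ k) v = 0 → (F - μ • 1) v = 0 := by
      intro μ hμ k
      have h3 : ∀ w : V, (F - μ • 1) ((F - μ • 1) w) = 0 → (F - μ • 1) w = 0 := by
        intro w hw
        set u := (F - μ • 1) w with hu_def
        have hu : F u = μ • u := by
          have h4 : (F - μ • 1) u = 0 := hw
          rw [LinearMap.sub_apply, LinearMap.smul_apply, Module.End.one_apply,
            sub_eq_zero] at h4
          exact h4
        have hwv : F w = μ • w + u := by
          rw [hu_def, LinearMap.sub_apply, LinearMap.smul_apply, Module.End.one_apply]
          abel
        rcases eq_or_lt_of_le hμ with heq | hlt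
        · exact h2 μ heq.symm u w hu hwv
        · exact h1 μ hlt u hu
      induction k with
      | zero =>
        intro v hv
        simp only [pow_zero, Module.End.one_apply] at hv
        rw [hv, map_zero]
      | succ n ih =>
        intro v hv
        have : ((F - μ • 1) ^ n) ((F - μ • 1) v) = 0 := by
          rw [← Module.End.mul_apply, ← pow_succ]; exact hv
        exact h3 v (ih ((F - μ • 1) v) this)
    -- assemble: the set of vectors with bounded orbit is a submodule containing
    -- every generalized eigenspace
    intro v
    let S : Submodule ℂ V :=
      { carrier := {v | ∃ c : ℝ, ∀ t : ℕ, ‖(F ^ t) v‖ ≤ c}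
        add_mem' := by
          rintro a b ⟨ca, hca⟩ ⟨cb, hcb⟩
          refine ⟨ca + cb, fun t => ?_⟩
          calc ‖(F ^ t) (a + b)‖ = ‖(F ^ t) a + (F ^ t) b‖ := by rw [map_add]
            _ ≤ ‖(F ^ t) a‖ + ‖(F ^ t) b‖ := norm_add_le _ _
            _ ≤ ca + cb := add_le_add (hca t) (hcb t)
        zero_mem' := ⟨0, fun t => by simp⟩
        smul_mem' := by
          rintro a x ⟨c, hc⟩
          refine ⟨‖a‖ * c, fun t => ?_⟩
          rw [map_smul, norm_smul]
          exact mul_le_mul_of_nonneg_left (hc t) (norm_nonneg a) }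
    suffices hS : S = ⊤ by
      have hv : v ∈ S := hS ▸ Submodule.mem_top
      exact hv
    rw [← top_le_iff, ← Module.End.iSup_maxGenEigenspace_eq_top F]
    refine iSup_le fun μ => ?_
    intro x hx
    obtain ⟨k, hk⟩ := (Module.End.mem_maxGenEigenspace F μ x).1 hx
    rcases lt_or_ge ‖μ‖ 1 with hlt | hge
    · have htend := small_orbit_tendsto F μ hlt x k hk
      have hb : BddAbove (Set.range fun t : ℕ => ‖(F ^ t) x‖) := by
        have : Tendsto (fun t : ℕ => ‖(F ^ t) x‖) atTop (nhds 0) := by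
          simpa using htend.norm
        exact this.bddAbove_range
      obtain ⟨c, hc⟩ := hb
      exact ⟨c, fun t => hc ⟨t, rfl⟩⟩
    · have hx1 : (F - μ • 1) x = 0 := hker μ hge k x hk
      have hFx : F x = μ • x := by
        rw [LinearMap.sub_apply, LinearMap.smul_apply, Module.End.one_apply,
          sub_eq_zero] at hx1
        exact hx1
      refine ⟨‖x‖, fun t => ?_⟩
      rw [eig_pow F μ x hFx t, norm_smul, norm_pow]
      rcases eq_or_lt_of_le hge with heq | hlt1
      · rw [← heq, one_pow, one_mul]
      · have hx0 : x = 0 := h1 μ hlt1 x hFx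
        simp [hx0]
  · -- bounded orbits imply Cesàro convergence
    intro h v
    set G : V →ₗ[ℂ] V := F - 1 with hG
    have hfix : ∀ u : V, G u = 0 → ∀ k : ℕ, (F ^ k) u = u := by
      intro u hu
      have hFu : F u = u := by
        rw [hG, LinearMap.sub_apply, Module.End.one_apply, sub_eq_zero] at hu
        exact hu
      intro k
      induction k with
      | zero => simp
      | succ n ih => rw [pow_succ, Module.End.mul_apply, hFu, ih]
    have htel : ∀ w : V, ∀ t : ℕ,
        ∑ k ∈ Finset.range t, (F ^ k) (G w) = (F ^ t) w - w := by
      intro w t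
      have hterm : ∀ k : ℕ, (F ^ k) (G w) = (F ^ (k + 1)) w - (F ^ k) w := by
        intro k
        rw [hG, LinearMap.sub_apply, Module.End.one_apply, map_sub,
          ← Module.End.mul_apply, ← pow_succ]
      rw [Finset.sum_congr rfl fun k _ => hterm k,
        Finset.sum_range_sub (f := fun k => (F ^ k) w)]
      simp
    have hdisj : LinearMap.ker G ⊓ LinearMap.range G = ⊥ := by
      rw [eq_bot_iff]
      intro x hx
      rw [Submodule.mem_inf] at hx
      obtain ⟨hxK, hxR⟩ := hx
      obtain ⟨w, hw⟩ := hxR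
      obtain ⟨c, hc⟩ := h w
      have hxfix : ∀ k, (F ^ k) x = x := hfix x (LinearMap.mem_ker.1 hxK)
      have hsum : ∀ t : ℕ, (t : ℝ) * ‖x‖ ≤ c + ‖w‖ := by
        intro t
        have h5 : ∑ k ∈ Finset.range t, (F ^ k) x = (F ^ t) w - w := by
          rw [← hw]; exact htel w t
        have h6 : ∑ k ∈ Finset.range t, (F ^ k) x = (t : ℂ) • x := by
          rw [Finset.sum_congr rfl fun k _ => hxfix k, Finset.sum_const,
            Finset.card_range, ← Nat.cast_smul_eq_nsmul ℂ]
        have h7 : ‖(t : ℂ) • x‖ ≤ c + ‖w‖ := by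
          rw [← h6, h5]
          calc ‖(F ^ t) w - w‖ ≤ ‖(F ^ t) w‖ + ‖w‖ := norm_sub_le _ _
            _ ≤ c + ‖w‖ := add_le_add (hc t) le_rfl
        rwa [norm_smul, Complex.norm_natCast] at h7
      rw [Submodule.mem_bot]
      by_contra hx0
      obtain ⟨t, ht⟩ := exists_nat_gt ((c + ‖w‖) / ‖x‖)
      have hxpos : (0 : ℝ) < ‖x‖ := norm_pos_iff.2 hx0
      rw [div_lt_iff₀ hxpos] at ht
      exact absurd (hsum t) (by linarith)
    have hsup : LinearMap.ker G ⊔ LinearMap.range G = ⊤ := by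
      apply Submodule.eq_top_of_finrank_eq
      have h7 := Submodule.finrank_sup_add_finrank_inf_eq
        (LinearMap.ker G) (LinearMap.range G)
      have h8 := LinearMap.finrank_range_add_finrank_ker G
      rw [hdisj, finrank_bot] at h7
      omega
    have hv : v ∈ LinearMap.ker G ⊔ LinearMap.range G := hsup ▸ Submodule.mem_top
    rw [Submodule.mem_sup] at hv
    obtain ⟨u, hu, r, hr, rfl⟩ := hv
    obtain ⟨w, hw⟩ := hr
    obtain ⟨c, hc⟩ := h w
    refine ⟨u, ?_⟩
    have heq : ∀ t : ℕ, 1 ≤ t → (t : ℂ)⁻¹ • ∑ k ∈ Finset.range t, (F ^ k) (u + r)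
        = u + (t : ℂ)⁻¹ • ((F ^ t) w - w) := by
      intro t ht
      have ht0 : (t : ℂ) ≠ 0 := Nat.cast_ne_zero.2 (by omega)
      have hsum : ∑ k ∈ Finset.range t, (F ^ k) (u + r)
          = (t : ℂ) • u + ((F ^ t) w - w) := by
        have : ∀ k ∈ Finset.range t, (F ^ k) (u + r) = (F ^ k) u + (F ^ k) r :=
          fun k _ => map_add _ u r
        rw [Finset.sum_congr rfl this, Finset.sum_add_distrib]
        congr 1
        · rw [Finset.sum_congr rfl fun k _ => hfix u (LinearMap.mem_ker.1 hu) k,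
            Finset.sum_const, Finset.card_range, ← Nat.cast_smul_eq_nsmul ℂ]
        · rw [← hw]; exact htel w t
      rw [hsum, smul_add, smul_smul, inv_mul_cancel₀ ht0, one_smul]
    have h9 : Tendsto (fun t : ℕ => (t : ℂ)⁻¹ • ((F ^ t) w - w)) atTop (nhds 0) := by
      apply squeeze_zero_norm (a := fun t : ℕ => (t : ℝ)⁻¹ * (c + ‖w‖))
      · intro t
        rw [norm_smul, norm_inv, Complex.norm_natCast]
        refine mul_le_mul_of_nonneg_left ?_ (by positivity)
        calc ‖(F ^ t) w - w‖ ≤ ‖(F ^ t) w‖ + ‖w‖ := norm_sub_le _ _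
          _ ≤ c + ‖w‖ := add_le_add (hc t) le_rfl
      · simpa using (tendsto_inv_atTop_nhds_zero_nat (𝕜 := ℝ)).mul_const (c + ‖w‖)
    have hlim : Tendsto (fun t : ℕ => u + (t : ℂ)⁻¹ • ((F ^ t) w - w)) atTop (nhds u) := by
      simpa using tendsto_const_nhds.add h9
    refine Tendsto.congr' ?_ hlim
    filter_upwards [eventually_ge_atTop 1] with t ht
    exact (heq t ht).symm
end

section
/- Let μ : V → V be a linear operator on a subspace V of Hermitian n×n matrices that is trace-preserving (tr(μ(Q)) = tr(Q) for all Q ∈ V), and let Q₀ ∈ V with tr(Q₀) = 1. If there is c with tr(μ^t(Q₀)²) ≤ c for all t, then the limit Q̃ = lim_{t→∞} (1/t)·∑_{k=0}^{t-1} μ^k(Q₀) exists, satisfies μ(Q̃) = Q̃ and tr(Q̃) = 1. -/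
/-!
Since `tr (Q ^ 2) = ‖Q‖ ^ 2` for the Frobenius norm of a Hermitian `Q`, the orbit of `Q₀` is
bounded, and the theorem is a finite-dimensional mean ergodic theorem. On the space `W` of
vectors with bounded orbit, the Cesàro averages fix every vector of `ker (μ - 1)` and tend to
zero on `range (μ - 1)` (on `μ y - y` they telescope to `(μ ^ t y - y) / t`).
Hence these two subspaces meet only in `0`, so by rank–nullity they span `W`, and the
averages of `Q₀ = q + (μ y - y)` converge to `q`.
The trace of every average is `1`, and so is that of the limit.
-/

open Filter Matrix Bornology Topology

theorem birkhoffAverage_eq_of_forall_iterate (R : Type*) {α M : Type*} [DivisionSemiring R]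
    [AddCommMonoid M] [Module R M] {f : α → α} {g : α → M} {x : α} {c : M}
    (h : ∀ k, g (f^[k] x) = c) {n : ℕ} (hn : (n : R) ≠ 0) :
    birkhoffAverage R f g n x = c := by
  rw [birkhoffAverage, birkhoffSum, Finset.sum_congr rfl fun k _ => h k, Finset.sum_const,
    Finset.card_range, ← Nat.cast_smul_eq_nsmul R, inv_smul_smul₀ hn]

namespace LinearMap

theorem birkhoffAverage_id_apply {R E : Type*} [DivisionSemiring R] [AddCommMonoid E]
    [Module R E] (f : E →ₗ[R] E) (t : ℕ) (x : E) :
    birkhoffAverage R (⇑f) _root_.id t x =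
      (t : R)⁻¹ • ∑ k ∈ Finset.range t, (f ^ k) x := by
  simp only [birkhoffAverage, birkhoffSum, Module.End.pow_apply, _root_.id]

variable {E : Type*} [NormedAddCommGroup E] [NormedSpace ℝ E]

def boundedOrbits (f : E →ₗ[ℝ] E) : Submodule ℝ E where
  carrier := {x | IsBounded (Set.range fun k : ℕ => (f ^ k) x)}
  zero_mem' := by simp
  add_mem' {x y} hx hy := (hx.add hy).subset <| Set.range_subset_iff.2 fun k => by
    rw [map_add]; exact Set.add_mem_add (Set.mem_range_self k) (Set.mem_range_self k)
  smul_mem' c x hx := (IsBounded.smul₀ hx c).subset <| Set.range_subset_iff.2 fun k => by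
    rw [map_smul]; exact Set.smul_mem_smul_set (Set.mem_range_self k)

theorem mem_boundedOrbits {f : E →ₗ[ℝ] E} {x : E} :
    x ∈ boundedOrbits f ↔ IsBounded (Set.range fun k : ℕ => (f ^ k) x) := Iff.rfl

theorem mapsTo_boundedOrbits (f : E →ₗ[ℝ] E) :
    Set.MapsTo f (boundedOrbits f) (boundedOrbits f) := fun x hx =>
  IsBounded.subset hx <| Set.range_subset_iff.2 fun k =>
    ⟨k + 1, by simp only [pow_succ, Module.End.mul_apply]⟩

theorem tendsto_birkhoffAverage_apply_sub {f : E →ₗ[ℝ] E} {y : E}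
    (hy : y ∈ boundedOrbits f) :
    Tendsto (fun t => birkhoffAverage ℝ (⇑f) _root_.id t (f y - y)) atTop (𝓝 0) := by
  simp only [birkhoffAverage_id_apply, map_sub, Finset.sum_sub_distrib, smul_sub]
  simp only [← birkhoffAverage_id_apply]
  refine tendsto_birkhoffAverage_apply_sub_birkhoffAverage ℝ ?_
  simpa only [mem_boundedOrbits, Module.End.pow_apply, id_eq] using hy

variable [FiniteDimensional ℝ E]

theorem exists_eq_add_sub_of_mem_boundedOrbits {f : E →ₗ[ℝ] E} {x : E}
    (hx : x ∈ boundedOrbits f) :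
    ∃ q y, f q = q ∧ y ∈ boundedOrbits f ∧ x = q + (f y - y) := by
  set g := f.restrict (mapsTo_boundedOrbits f)
  have hg : ∀ y, ((g - 1) y : E) = f y - y := fun y => rfl
  have hfix : ∀ w : boundedOrbits f, w ∈ ker (g - 1) → f w = w := fun w hw =>
    sub_eq_zero.1 (by rw [← hg, mem_ker.1 hw, Submodule.coe_zero])
  have hdisj : Disjoint (ker (g - 1)) (range (g - 1)) := by
    rw [Submodule.disjoint_def]
    rintro w hw ⟨y, rfl⟩
    refine Subtype.ext (tendsto_nhds_unique
      (Function.IsFixedPt.tendsto_birkhoffAverage ℝ (hfix _ hw) _root_.id) ?_)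
    rw [hg]
    exact tendsto_birkhoffAverage_apply_sub y.2
  have htop : ker (g - 1) ⊔ range (g - 1) = ⊤ :=
    Submodule.eq_top_of_disjoint _ _
      (by rw [add_comm]; exact (finrank_range_add_finrank_ker (g - 1)).ge) hdisj
  obtain ⟨q, hq, _, ⟨y, rfl⟩, hqy⟩ :=
    Submodule.mem_sup.1 (htop ▸ Submodule.mem_top (x := (⟨x, hx⟩ : boundedOrbits f)))
  exact ⟨q, y, hfix q hq, y.2, by rw [← hg]; exact congrArg Subtype.val hqy.symm⟩

theorem exists_tendsto_birkhoffAverage_of_isBounded {f : E →ₗ[ℝ] E} {x : E}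
    (hx : IsBounded (Set.range fun k : ℕ => (f ^ k) x)) :
    ∃ q, f q = q ∧
      Tendsto (fun t => birkhoffAverage ℝ (⇑f) _root_.id t x) atTop (𝓝 q) := by
  obtain ⟨q, y, hq, hy, rfl⟩ := exists_eq_add_sub_of_mem_boundedOrbits (mem_boundedOrbits.2 hx)
  refine ⟨q, hq, ?_⟩
  have hlim := (Function.IsFixedPt.tendsto_birkhoffAverage ℝ hq _root_.id).add
    (tendsto_birkhoffAverage_apply_sub hy)
  rw [add_zero] at hlim
  refine hlim.congr fun t => ?_
  simp only [birkhoffAverage_id_apply, map_add, Finset.sum_add_distrib, smul_add]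

end LinearMap

open scoped Matrix.Norms.Frobenius in
theorem Matrix.IsHermitian.frobenius_norm_sq {m 𝕜 : Type*} [Fintype m] [DecidableEq m]
    [RCLike 𝕜] {A : Matrix m m 𝕜} (hA : A.IsHermitian) :
    ‖A‖ ^ 2 = RCLike.re (A ^ 2).trace := by
  have hentry : ∀ i j, A i j * A j i = ((‖A i j‖ ^ 2 : ℝ) : 𝕜) := fun i j => by
    rw [← hA.apply j i, RCLike.star_def, RCLike.mul_conj, RCLike.ofReal_pow]
  rw [frobenius_norm_def, ← Real.sqrt_eq_rpow, Real.sq_sqrt (by positivity)]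
  simp only [trace, diag, sq, mul_apply, hentry, ← RCLike.ofReal_sum, RCLike.ofReal_re,
    Real.rpow_two]

/-- Stationary limit densities of bounded quantum predictor models: a
trace-preserving linear operator on a subspace of Hermitian matrices whose
orbit of a generalized density Q₀ is bounded (in the Hilbert-Schmidt sense)
has converging Cesàro averages; the limit is a fixed point of trace 1. -/
theorem stationary_limit_density {n : ℕ}
    (V : Submodule ℝ (Matrix (Fin n) (Fin n) ℂ))
    (hherm : ∀ Q ∈ V, Q.IsHermitian)
    (μ : Matrix (Fin n) (Fin n) ℂ →ₗ[ℝ] Matrix (Fin n) (Fin n) ℂ)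
    (hmapsto : ∀ Q ∈ V, μ Q ∈ V)
    (htr : ∀ Q ∈ V, (μ Q).trace = Q.trace)
    (Q₀ : Matrix (Fin n) (Fin n) ℂ) (hQ₀ : Q₀ ∈ V) (hQ₀tr : Q₀.trace = 1)
    (hbdd : ∃ c : ℝ, ∀ t : ℕ, (((μ ^ t) Q₀ ^ 2).trace).re ≤ c) :
    ∃ Qlim : Matrix (Fin n) (Fin n) ℂ,
      Tendsto (fun t : ℕ => (t : ℝ)⁻¹ • ∑ k ∈ Finset.range t, (μ ^ k) Q₀)
        atTop (nhds Qlim) ∧ μ Qlim = Qlim ∧ Qlim.trace = 1 := by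
  obtain ⟨c, hc⟩ := hbdd
  have horbit : ∀ k, μ^[k] Q₀ ∈ V := fun k =>
    Set.MapsTo.iterate (fun Q hQ => hmapsto Q hQ) k hQ₀
  have htrace : ∀ k, (μ^[k] Q₀).trace = 1 := by
    intro k
    induction k with
    | zero => exact hQ₀tr
    | succ k ih => rw [Function.iterate_succ_apply', htr _ (horbit k), ih]
  obtain ⟨Qlim, hfix, hlim⟩ :
      ∃ Q, μ Q = Q ∧ Tendsto (fun t => birkhoffAverage ℝ μ id t Q₀) atTop (𝓝 Q) := by
    open scoped Matrix.Norms.Frobenius in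
    refine μ.exists_tendsto_birkhoffAverage_of_isBounded <| isBounded_iff_forall_norm_le.2
      ⟨√c, Set.forall_mem_range.2 fun k => Real.le_sqrt_of_sq_le ?_⟩
    rw [(hherm _ (Module.End.pow_apply μ k Q₀ ▸ horbit k)).frobenius_norm_sq]
    exact hc k
  have htrace_avg : ∀ᶠ t in atTop, (birkhoffAverage ℝ μ id t Q₀).trace = 1 :=
    (eventually_ne_atTop 0).mono fun t ht => by
      rw [← traceAddMonoidHom_apply, map_birkhoffAverage ℝ ℝ]
      exact birkhoffAverage_eq_of_forall_iterate ℝ htrace (Nat.cast_ne_zero.2 ht)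
  refine ⟨Qlim, ?_, hfix, ?_⟩
  · simpa only [μ.birkhoffAverage_id_apply] using hlim
  · exact (isClosed_eq continuous_id.matrix_trace continuous_const).mem_of_tendsto hlim htrace_avg
end

section
/- Conversely, if the Hankel matrix P = [p(vw)]_{v,w∈Σ*} of a string function p : Σ* → ℝ with p(ε) = 1 has rank at most d, then there exist π ∈ ℝ^d (or ℂ^d) and matrices M_a ∈ ℝ^{d×d} (a ∈ Σ) such that p(a₁...a_n) = πᵀ M_{a₁}···M_{a_n} 𝟙 for all words. -/
/-!
The rows `p_v` span a space `V` of dimension at most `d`, stable under the shifts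
`f ↦ (w ↦ f (a :: w))`, which send `p_v` to `p_{va}`. Hence `p v` is the evaluation at `ε` of
`p_ε` moved along `v` by the shifts, and dually, the evaluation functional moved by the dual
shifts, evaluated at `p_ε`. Any such linear representation on a space of dimension at most `d`
becomes a matrix one: choose a surjection `j : K^d → V*` sending `𝟙` to the (nonzero)
evaluation functional and lift each dual shift through `j`.
-/

open Matrix Module

theorem LinearEquiv.exists_apply_eq_of_dual {K V : Type*} [DivisionRing K] [AddCommGroup V]
    [Module K V] {f : Dual K V} {x y : V} (hx : f x = 1) (hy : f y ≠ 0) :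
    ∃ e : V ≃ₗ[K] V, e x = y :=
  ⟨dilatransvection (f := f) (v := y - x) (by simpa [hx] using hy),
    by simp [dilatransvection.apply, hx]⟩

theorem exists_linearEquiv_const_one_eq {K ι : Type*} [DivisionRing K] {u : ι → K} (hu : u ≠ 0) :
    ∃ e : (ι → K) ≃ₗ[K] (ι → K), e (fun _ => 1) = u := by
  obtain ⟨i, hi⟩ := Function.ne_iff.mp hu
  exact LinearEquiv.exists_apply_eq_of_dual (f := LinearMap.proj i) rfl hi

section Realization

variable {K W ι : Type*} [Field K] [AddCommGroup W] [Module K W] {d : ℕ}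

theorem exists_surjective_of_finrank_le [Module.Finite K W] (hW : finrank K W ≤ d) :
    ∃ j : (Fin d → K) →ₗ[K] W, Function.Surjective j :=
  ⟨(finBasis K W).equivFun.symm.toLinearMap ∘ₗ LinearMap.funLeft K K (Fin.castLE hW),
    (finBasis K W).equivFun.symm.surjective.comp
      (LinearMap.funLeft_surjective_of_injective K K _ (Fin.castLE_injective hW))⟩

theorem exists_surjective_const_one_eq [Module.Finite K W] (hW : finrank K W ≤ d) {ω : W}
    (hω : ω ≠ 0) : ∃ j : (Fin d → K) →ₗ[K] W, Function.Surjective j ∧ j (fun _ => 1) = ω := by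
  obtain ⟨j, hj⟩ := exists_surjective_of_finrank_le hW
  obtain ⟨u, rfl⟩ := hj ω
  obtain ⟨e, he⟩ := exists_linearEquiv_const_one_eq (u := u) fun hu => hω (hu ▸ map_zero j)
  exact ⟨j ∘ₗ e.toLinearMap, hj.comp e.surjective, by simp [he]⟩

theorem exists_matrix_mulVec_lift {j : (Fin d → K) →ₗ[K] W} (hj : Function.Surjective j)
    (T : Module.End K W) : ∃ M : Matrix (Fin d) (Fin d) K, ∀ x, j (M *ᵥ x) = T (j x) := by
  obtain ⟨h, hh⟩ := Module.projective_lifting_property j (T ∘ₗ j) hj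
  exact ⟨LinearMap.toMatrix' h, fun x => by
    rw [LinearMap.toMatrix'_mulVec, ← LinearMap.comp_apply, hh, LinearMap.comp_apply]⟩

theorem apply_list_prod_mulVec_of_semiconj {j : (Fin d → K) →ₗ[K] W} {T : ι → Module.End K W}
    {M : ι → Matrix (Fin d) (Fin d) K} (hM : ∀ a x, j (M a *ᵥ x) = T a (j x)) (v : List ι)
    (x : Fin d → K) : j ((v.map M).prod *ᵥ x) = (v.map T).prod (j x) := by
  induction v with
  | nil => simp
  | cons a v ih => simp [← mulVec_mulVec, hM, ih, Module.End.mul_apply]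

theorem exists_dotProduct_eq (α : Dual K (Fin d → K)) : ∃ π : Fin d → K, ∀ y, α y = π ⬝ᵥ y :=
  ⟨fun i => α fun j => if i = j then 1 else 0, fun y => by
    simp [LinearMap.pi_apply_eq_sum_univ α y, dotProduct, mul_comm]⟩

theorem exists_matrix_realization [Module.Finite K W] (hW : finrank K W ≤ d)
    (T : ι → Module.End K W) (α : Dual K W) {ω : W} (hω : ω ≠ 0) :
    ∃ (π : Fin d → K) (M : ι → Matrix (Fin d) (Fin d) K),
      ∀ v : List ι, α ((v.map T).prod ω) = π ⬝ᵥ ((v.map M).prod *ᵥ fun _ => 1) := by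
  obtain ⟨j, hj, rfl⟩ := exists_surjective_const_one_eq hW hω
  choose M hM using fun a => exists_matrix_mulVec_lift hj (T a)
  obtain ⟨π, hπ⟩ := exists_dotProduct_eq (α ∘ₗ j)
  refine ⟨π, M, fun v => ?_⟩
  rw [← apply_list_prod_mulVec_of_semiconj hM, ← hπ, LinearMap.comp_apply]

end Realization

section Hankel

variable {K A : Type*} [Field K] (p : List A → K)

def hankelRowSpace : Submodule K (List A → K) :=
  Submodule.span K (Set.range fun v w => p (v ++ w))

def hankelRow (v : List A) : hankelRowSpace p :=
  ⟨fun w => p (v ++ w), Submodule.subset_span ⟨v, rfl⟩⟩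

theorem hankelRowSpace_le_comap_funLeft_cons (a : A) :
    hankelRowSpace p ≤ (hankelRowSpace p).comap (LinearMap.funLeft K K (List.cons a)) :=
  Submodule.span_le.mpr <| Set.range_subset_iff.mpr fun v =>
    Submodule.mem_comap.mpr <| Submodule.subset_span ⟨v ++ [a], funext fun w => by simp⟩

def hankelShift (a : A) : Module.End K (hankelRowSpace p) :=
  (LinearMap.funLeft K K (List.cons a)).restrict (hankelRowSpace_le_comap_funLeft_cons p a)

theorem hankelShift_hankelRow (a : A) (v : List A) :
    hankelShift p a (hankelRow p v) = hankelRow p (v ++ [a]) :=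
  Subtype.ext <| funext fun w => by simp [hankelShift, hankelRow, LinearMap.funLeft]

def hankelEval : Dual K (hankelRowSpace p) :=
  LinearMap.proj [] ∘ₗ (hankelRowSpace p).subtype

@[simp]
theorem hankelEval_hankelRow (v : List A) : hankelEval p (hankelRow p v) = p v := by
  simp [hankelEval, hankelRow]

theorem list_prod_dualMap_hankelShift_apply (φ : Dual K (hankelRowSpace p)) (u v : List A) :
    (v.map fun a => (hankelShift p a).dualMap).prod φ (hankelRow p u) =
      φ (hankelRow p (u ++ v)) := by
  induction v generalizing u with
  | nil => simp
  | cons a v ih =>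
    simp [Module.End.mul_apply, LinearMap.dualMap_apply, hankelShift_hankelRow, ih]

end Hankel

theorem finitary_of_hankel_rank_le_general {A : Type*} {d : ℕ}
    (p : List A → ℝ) (hpε : p [] = 1)
    (hrank : Module.rank ℝ
      (Submodule.span ℝ (Set.range fun v : List A => fun w : List A => p (v ++ w)))
      ≤ d) :
    ∃ (π : Fin d → ℝ) (M : A → Matrix (Fin d) (Fin d) ℝ),
      ∀ v : List A, p v = π ⬝ᵥ ((v.map M).prod *ᵥ (fun _ => 1)) := by
  have : Module.Finite ℝ (hankelRowSpace p) :=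
    Module.rank_lt_aleph0_iff.mp (hrank.trans_lt Cardinal.natCast_lt_aleph0)
  have hdual : finrank ℝ (Dual ℝ (hankelRowSpace p)) ≤ d := by
    rw [Subspace.dual_finrank_eq]
    exact Module.finrank_le_of_rank_le hrank
  have hEval : hankelEval p ≠ 0 := fun h => by
    simpa [hpε] using LinearMap.congr_fun h (hankelRow p [])
  obtain ⟨π, M, hM⟩ := exists_matrix_realization hdual (fun a => (hankelShift p a).dualMap)
    (Dual.eval ℝ _ (hankelRow p [])) hEval
  refine ⟨π, M, fun v => ?_⟩
  rw [← hM v, Dual.eval_apply, list_prod_dualMap_hankelShift_apply, List.nil_append,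
    hankelEval_hankelRow]

/-- If the Hankel matrix of a string function p with p(ε) = 1 has rank at most
d, then p admits a d-dimensional finitary parametrization. -/
theorem finitary_of_hankel_rank_le {A : Type*} [Fintype A] {d : ℕ}
    (p : List A → ℝ) (hpε : p [] = 1)
    (hrank : Module.rank ℝ
      (Submodule.span ℝ (Set.range fun v : List A => fun w : List A => p (v ++ w)))
      ≤ d) :
    ∃ (π : Fin d → ℝ) (M : A → Matrix (Fin d) (Fin d) ℝ),
      ∀ v : List A, p v = π ⬝ᵥ ((v.map M).prod *ᵥ (fun _ => 1)) :=
  finitary_of_hankel_rank_le_general p hpε hrank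
end
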